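/- Let s < 0. For each integer m ≥ 2 let u₀^{(m)}(x) = m^{−s} ( e^{−imx} + e^{−i(m−1)x} + e^{i(m+1)x} ) and let u₃^{(m)}(·,t) = ∫₀^t e^{i(t−τ)𝓛} 𝒩( e^{iτ𝓛} u₀^{(m)} ) dτ be the third Picard iterate of the Duhamel map for the 1D periodic Dysthe equation. Then there exist constants C₀, c > 0 (depending only on s) such that ‖u₀^{(m)}‖_{H^s(T)} ≤ C₀ for all m, while sup_{t∈[0,1]} ‖u₃^{(m)}(·,t)‖_{H^s(T)} ≥ c·m^{−2s} for all sufficiently large m. In particular, since m^{−2s} → ∞ as m → ∞, there is no constant C with sup_{t∈[0,1]} ‖u₃(·,t)‖_{H^s(T)} ≤ C‖u₀‖_{H^s(T)} for all trigonometric-polynomial data u₀; the map from data to the third Picard iterate is unbounded, so the 1D periodic Dysthe equation is ill-posed in H^s(T) for s < 0. -/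

import Mathlib

open scoped BigOperators

noncomputable section

/-- Dispersion relation of the linearized 1D periodic Dysthe equation. -/
def P (n : ℤ) : ℤ := n ^ 3 - 2 * n ^ 2 + 8 * n

/-- A trigonometric polynomial on `T = [0,2π]`, given by its finitely supported
family of spatial Fourier coefficients `f̂(n)`. -/
abbrev TrigPoly1 := ℤ →₀ ℂ

/-- Product of trigonometric polynomials: convolution of the coefficients, which
corresponds to the pointwise product of the realized functions. -/
def cmul (f g : TrigPoly1) : TrigPoly1 :=
  f.sum fun a fa => g.sum fun b gb => Finsupp.single (a + b) (fa * gb)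

/-- Complex conjugation at the level of Fourier coefficients:
`(conj f)̂(n) = conj (f̂(-n))`. -/
def conjC (f : TrigPoly1) : TrigPoly1 :=
  Finsupp.equivMapDomain (Equiv.neg ℤ) (Finsupp.mapRange (starRingEnd ℂ) (map_zero _) f)

/-- Spatial derivative `∂ₓ`: multiplies `f̂(n)` by `i n`. -/
def dx (f : TrigPoly1) : TrigPoly1 :=
  Finsupp.onFinset f.support (fun n => Complex.I * (n : ℂ) * f n)
    (fun n h => Finsupp.mem_support_iff.2 fun h0 => h (by simp [h0]))

/-- Fourier multiplier `|∂ₓ|`: multiplies `f̂(n)` by `|n|`. -/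
def absDx (f : TrigPoly1) : TrigPoly1 :=
  Finsupp.onFinset f.support (fun n => ((|n| : ℤ) : ℂ) * f n)
    (fun n h => Finsupp.mem_support_iff.2 fun h0 => h (by simp [h0]))

/-- Linear propagator `e^{it𝓛}`: multiplies `f̂(n)` by `e^{itP(n)}`. -/
def propL (t : ℝ) (f : TrigPoly1) : TrigPoly1 :=
  Finsupp.onFinset f.support (fun n => Complex.exp (Complex.I * (t : ℂ) * (P n : ℂ)) * f n)
    (fun n h => Finsupp.mem_support_iff.2 fun h0 => h (by simp [h0]))

/-- The Dysthe nonlinearity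
`𝒩(u) = −(i/2)|u|²u − (3/2)|u|²∂ₓu − (1/4)u²∂ₓ(conj u) + (i/2) u|∂ₓ|(|u|²)`,
where `|u|² = u · conj u`. -/
def Ncal (u : TrigPoly1) : TrigPoly1 :=
  (-(Complex.I / 2)) • cmul (cmul u (conjC u)) u
    - ((3 : ℂ) / 2) • cmul (cmul u (conjC u)) (dx u)
    - ((1 : ℂ) / 4) • cmul (cmul u u) (dx (conjC u))
    + (Complex.I / 2) • cmul u (absDx (cmul u (conjC u)))

/-- Fourier coefficients of the third Picard iterate
`u₃(·,t) = ∫₀ᵗ e^{i(t−τ)𝓛} 𝒩(e^{iτ𝓛} u₀) dτ` of the Duhamel map. -/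
def u3 (u₀ : TrigPoly1) (t : ℝ) (n : ℤ) : ℂ :=
  ∫ τ in (0:ℝ)..t, Complex.exp (Complex.I * ((t - τ : ℝ) : ℂ) * (P n : ℂ)) *
    (Ncal (propL τ u₀)) n

/-- Sobolev `H^s(T)` norm of a function given by its Fourier coefficients. -/
def HsNorm (s : ℝ) (g : ℤ → ℂ) : ℝ :=
  (∑' n : ℤ, (1 + |(n : ℝ)|) ^ (2 * s) * ‖g n‖ ^ 2) ^ ((1:ℝ) / 2)

/-- Initial data `u₀^{(m)}(x) = m^{−s} (e^{−imx} + e^{−i(m−1)x} + e^{i(m+1)x})`. -/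
def u0m (s : ℝ) (m : ℕ) : TrigPoly1 :=
  (((m : ℝ) ^ (-s) : ℝ) : ℂ) •
    (Finsupp.single (-(m : ℤ)) 1 + Finsupp.single (-(m : ℤ) + 1) 1 +
      Finsupp.single ((m : ℤ) + 1) 1)

/-!
On frequency `-m` every cubic interaction of the three modes of `u₀^{(m)}` is trivially
resonant (the conjugated mode coincides with one of the other two), so the Duhamel integrand
at `-m` is a constant and `|û₃(1, -m)| = (21m - 14)/4 · m^{-3s}`, the factor `m` coming from the
derivatives in the Dysthe nonlinearity. Hence `‖u₃(1)‖_{H^s} ≥ (1 + m)^s |û₃(1, -m)| ≥ 2^s m^{-2s}`,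
while the data stay bounded in `H^s` because their frequencies all have size about `m`.
-/

open Complex ComplexConjugate Finsupp

lemma norm_exp_I_mul (t : ℝ) (k : ℤ) : ‖exp (I * t * k)‖ = 1 := by
  rw [show I * t * k = ((t * k : ℝ) : ℂ) * I by push_cast; ring, norm_exp_ofReal_mul_I]

section FourierAlgebra

@[simp] lemma propL_apply (t : ℝ) (f : TrigPoly1) (n : ℤ) :
    propL t f n = exp (I * t * P n) * f n := rfl

@[simp] lemma dx_apply (f : TrigPoly1) (n : ℤ) : dx f n = I * n * f n := rfl

@[simp] lemma absDx_apply (f : TrigPoly1) (n : ℤ) : absDx f n = (|n| : ℤ) * f n := rfl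

@[simp] lemma conjC_apply (f : TrigPoly1) (n : ℤ) : conjC f n = conj (f (-n)) := rfl

lemma propL_add (t : ℝ) (f g : TrigPoly1) : propL t (f + g) = propL t f + propL t g := by
  ext n; simp [mul_add]

lemma dx_add (f g : TrigPoly1) : dx (f + g) = dx f + dx g := by
  ext n; simp [mul_add]

lemma absDx_add (f g : TrigPoly1) : absDx (f + g) = absDx f + absDx g := by
  ext n; simp [mul_add]

lemma conjC_add (f g : TrigPoly1) : conjC (f + g) = conjC f + conjC g := by
  ext n; simp

lemma propL_single (t : ℝ) (a : ℤ) (x : ℂ) :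
    propL t (single a x) = single a (exp (I * t * P a) * x) := by
  ext n; by_cases h : a = n <;> simp [h]

lemma dx_single (a : ℤ) (x : ℂ) : dx (single a x) = single a (I * a * x) := by
  ext n; by_cases h : a = n <;> simp [h]

lemma absDx_single (a : ℤ) (x : ℂ) : absDx (single a x) = single a ((|a| : ℤ) * x) := by
  ext n; by_cases h : a = n <;> simp [h]

lemma conjC_single (a : ℤ) (x : ℂ) : conjC (single a x) = single (-a) (conj x) := by
  ext n; by_cases h : a = -n <;> simp [h, neg_eq_iff_eq_neg]

lemma cmul_single_single (a b : ℤ) (x y : ℂ) :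
    cmul (single a x) (single b y) = single (a + b) (x * y) := by
  simp [cmul]

lemma cmul_add_left (f g h : TrigPoly1) : cmul (f + g) h = cmul f h + cmul g h := by
  rw [cmul, cmul, cmul, sum_add_index] <;> simp [add_mul, sum_add]

lemma cmul_add_right (f g h : TrigPoly1) : cmul f (g + h) = cmul f g + cmul f h := by
  simp only [cmul, ← sum_add]
  exact sum_congr fun a _ => by rw [sum_add_index] <;> simp [mul_add]

end FourierAlgebra

lemma Ncal_three_modes_apply (m : ℤ) (hm : 1 ≤ m) (x y z : ℂ) :
    Ncal (single (-m) x + single (-m + 1) y + single (m + 1) z) (-m) =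
      I * x * ((5 * m - 2) / 4 * ‖x‖ ^ 2 + (5 * m - 3) / 2 * ‖y‖ ^ 2
        + 3 * (m - 1) / 2 * ‖z‖ ^ 2) := by
  simp only [Ncal, conjC_add, conjC_single, dx_add, dx_single, absDx_add, absDx_single,
    cmul_add_left, cmul_add_right, cmul_single_single, Finsupp.add_apply, Finsupp.sub_apply,
    Finsupp.smul_apply, smul_eq_mul, single_apply]
  simp (disch := omega) only [if_pos, if_neg]
  have h₁ : |-m + -(-m + 1)| = 1 := by rw [show -m + -(-m + 1) = -1 by ring]; rfl
  have h₂ : |-m + -(m + 1)| = 2 * m + 1 := by rw [abs_of_neg (by omega)]; ring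
  simp only [neg_neg, neg_add_cancel, add_neg_cancel, abs_zero, h₁, h₂]
  rw [← mul_conj', ← mul_conj', ← mul_conj']
  push_cast
  ring

section Support

open scoped Pointwise

lemma support_cmul_subset (f g : TrigPoly1) : (cmul f g).support ⊆ f.support + g.support := by
  intro n hn
  obtain ⟨a, ha, hn⟩ := Finset.mem_biUnion.1 (support_sum hn)
  obtain ⟨b, hb, hn⟩ := Finset.mem_biUnion.1 (support_sum hn)
  rw [Finset.mem_singleton.1 (support_single_subset hn)]
  exact Finset.add_mem_add ha hb

variable {f g : TrigPoly1} {R R' : ℤ}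

lemma support_cmul_subset_Icc (hf : f.support ⊆ Finset.Icc (-R) R)
    (hg : g.support ⊆ Finset.Icc (-R') R') :
    (cmul f g).support ⊆ Finset.Icc (-(R + R')) (R + R') := by
  rw [neg_add]
  exact (support_cmul_subset f g).trans
    ((Finset.add_subset_add hf hg).trans (Finset.Icc_add_Icc_subset _ _ _ _))

lemma support_conjC_subset_Icc (hf : f.support ⊆ Finset.Icc (-R) R) :
    (conjC f).support ⊆ Finset.Icc (-R) R := by
  intro n hn
  have : -n ∈ Finset.Icc (-R) R := hf (mem_support_iff.2 fun h => by simp [h] at hn)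
  simp only [Finset.mem_Icc] at this ⊢
  omega

lemma support_dx_subset (f : TrigPoly1) : (dx f).support ⊆ f.support := support_onFinset_subset

lemma support_absDx_subset (f : TrigPoly1) : (absDx f).support ⊆ f.support :=
  support_onFinset_subset

lemma support_propL_subset (t : ℝ) (f : TrigPoly1) : (propL t f).support ⊆ f.support :=
  support_onFinset_subset

lemma support_Ncal_subset_Icc {u : TrigPoly1} (hu : u.support ⊆ Finset.Icc (-R) R) :
    (Ncal u).support ⊆ Finset.Icc (-(3 * R)) (3 * R) := by
  have hū := support_conjC_subset_Icc hu
  have cubic : ∀ {F G H : TrigPoly1}, F.support ⊆ Finset.Icc (-R) R →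
      G.support ⊆ Finset.Icc (-R) R → H.support ⊆ Finset.Icc (-R) R →
      (cmul (cmul F G) H).support ⊆ Finset.Icc (-(3 * R)) (3 * R) := fun hF hG hH => by
    rw [show 3 * R = R + R + R by ring]
    exact support_cmul_subset_Icc (support_cmul_subset_Icc hF hG) hH
  have h₁ := cubic hu hū hu
  have h₂ := cubic hu hū ((support_dx_subset u).trans hu)
  have h₃ := cubic hu hu ((support_dx_subset _).trans hū)
  have h₄ : (cmul u (absDx (cmul u (conjC u)))).support ⊆ Finset.Icc (-(3 * R)) (3 * R) := by
    rw [show 3 * R = R + (R + R) by ring]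
    exact support_cmul_subset_Icc hu
      ((support_absDx_subset _).trans (support_cmul_subset_Icc hu hū))
  refine support_add.trans (Finset.union_subset (support_sub.trans (Finset.union_subset
    (support_sub.trans (Finset.union_subset ?_ ?_)) ?_)) ?_)
  exacts [support_smul.trans h₁, support_smul.trans h₂, support_smul.trans h₃,
    support_smul.trans h₄]

end Support

section L1

def l1Norm (f : TrigPoly1) : ℝ := ∑ n ∈ f.support, ‖f n‖

variable {f g : TrigPoly1}

lemma l1Norm_nonneg (f : TrigPoly1) : 0 ≤ l1Norm f := Finset.sum_nonneg fun _ _ => norm_nonneg _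

lemma l1Norm_eq_sum_of_support_subset {S : Finset ℤ} (h : f.support ⊆ S) :
    l1Norm f = ∑ n ∈ S, ‖f n‖ :=
  Finset.sum_subset h fun n _ hn => by simp [notMem_support_iff.1 hn]

lemma norm_apply_le_l1Norm (f : TrigPoly1) (n : ℤ) : ‖f n‖ ≤ l1Norm f := by
  by_cases hn : n ∈ f.support
  · exact Finset.single_le_sum (fun _ _ => norm_nonneg _) hn
  · simpa [notMem_support_iff.1 hn] using l1Norm_nonneg f

lemma l1Norm_add_le (f g : TrigPoly1) : l1Norm (f + g) ≤ l1Norm f + l1Norm g := by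
  rw [l1Norm_eq_sum_of_support_subset support_add,
    l1Norm_eq_sum_of_support_subset (Finset.subset_union_left (s₂ := g.support)),
    l1Norm_eq_sum_of_support_subset (Finset.subset_union_right (s₁ := f.support)),
    ← Finset.sum_add_distrib]
  exact Finset.sum_le_sum fun n _ => norm_add_le _ _

lemma l1Norm_le_of_norm_apply_le {M : ℝ} (h : ∀ n, ‖g n‖ ≤ M * ‖f n‖) :
    l1Norm g ≤ M * l1Norm f := by
  have hsub : g.support ⊆ f.support := fun n hn => by
    rw [mem_support_iff] at hn ⊢
    exact fun hf => hn (norm_le_zero_iff.1 (by simpa [hf] using h n))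
  rw [l1Norm_eq_sum_of_support_subset hsub, l1Norm, Finset.mul_sum]
  exact Finset.sum_le_sum fun n _ => h n

lemma l1Norm_smul_le (c : ℂ) (f : TrigPoly1) : l1Norm (c • f) ≤ ‖c‖ * l1Norm f :=
  l1Norm_le_of_norm_apply_le fun n => by simp

lemma l1Norm_sub_le (f g : TrigPoly1) : l1Norm (f - g) ≤ l1Norm f + l1Norm g := by
  rw [sub_eq_add_neg]
  refine (l1Norm_add_le f (-g)).trans ?_
  gcongr
  simpa using l1Norm_smul_le (-1) g

lemma l1Norm_single (a : ℤ) (x : ℂ) : l1Norm (single a x) = ‖x‖ := by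
  simp [l1Norm_eq_sum_of_support_subset (support_single_subset (a := a) (b := x))]

lemma l1Norm_cmul_le (f g : TrigPoly1) : l1Norm (cmul f g) ≤ l1Norm f * l1Norm g := by
  have subadd : ∀ (s : Finset ℤ) (F : ℤ → TrigPoly1),
      l1Norm (∑ i ∈ s, F i) ≤ ∑ i ∈ s, l1Norm (F i) :=
    Finset.le_sum_of_subadditive l1Norm (by simp [l1Norm]) l1Norm_add_le
  calc l1Norm (cmul f g)
      = l1Norm (∑ a ∈ f.support, ∑ b ∈ g.support, single (a + b) (f a * g b)) := rfl
    _ ≤ ∑ a ∈ f.support, ∑ b ∈ g.support, l1Norm (single (a + b) (f a * g b)) :=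
        (subadd _ _).trans (Finset.sum_le_sum fun a _ => subadd _ _)
    _ = l1Norm f * l1Norm g := by
        simp only [l1Norm_single, norm_mul]
        rw [l1Norm, l1Norm, Finset.sum_mul_sum]

lemma l1Norm_cmul_le_of_le {a b : ℝ} (hf : l1Norm f ≤ a) (hg : l1Norm g ≤ b) :
    l1Norm (cmul f g) ≤ a * b :=
  (l1Norm_cmul_le f g).trans
    (mul_le_mul hf hg (l1Norm_nonneg g) ((l1Norm_nonneg f).trans hf))

lemma l1Norm_propL_le (t : ℝ) (f : TrigPoly1) : l1Norm (propL t f) ≤ l1Norm f := by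
  simpa using l1Norm_le_of_norm_apply_le (M := 1) (f := f) (g := propL t f)
    fun n => by simp [norm_exp_I_mul]

lemma l1Norm_conjC (f : TrigPoly1) : l1Norm (conjC f) = l1Norm f :=
  Finset.sum_equiv (Equiv.neg ℤ) (fun n => by simp) (fun n _ => by simp)

variable {R : ℤ}

lemma l1Norm_dx_le (hf : f.support ⊆ Finset.Icc (-R) R) : l1Norm (dx f) ≤ R * l1Norm f := by
  refine l1Norm_le_of_norm_apply_le fun n => ?_
  by_cases hn : n ∈ f.support
  · have : |(n : ℝ)| ≤ R := by exact_mod_cast abs_le.2 (Finset.mem_Icc.1 (hf hn))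
    simp only [dx_apply, norm_mul, norm_I, norm_intCast, one_mul]
    gcongr
  · simp [notMem_support_iff.1 hn]

lemma l1Norm_absDx_le (hf : f.support ⊆ Finset.Icc (-R) R) :
    l1Norm (absDx f) ≤ R * l1Norm f := by
  refine l1Norm_le_of_norm_apply_le fun n => ?_
  by_cases hn : n ∈ f.support
  · have : |(n : ℝ)| ≤ R := by exact_mod_cast abs_le.2 (Finset.mem_Icc.1 (hf hn))
    simp only [absDx_apply, norm_mul, norm_intCast, Int.cast_abs, abs_abs]
    gcongr
  · simp [notMem_support_iff.1 hn]

lemma l1Norm_Ncal_le {u : TrigPoly1} (hR : 0 ≤ R) (hu : u.support ⊆ Finset.Icc (-R) R) :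
    l1Norm (Ncal u) ≤ 3 * (1 + R) * l1Norm u ^ 3 := by
  set L := l1Norm u
  have hū := support_conjC_subset_Icc hu
  have huū : l1Norm (cmul u (conjC u)) ≤ L * L := l1Norm_cmul_le_of_le le_rfl (l1Norm_conjC u).le
  have hdxū : l1Norm (dx (conjC u)) ≤ R * L := (l1Norm_dx_le hū).trans_eq (by rw [l1Norm_conjC])
  have habs : l1Norm (absDx (cmul u (conjC u))) ≤ (R + R : ℤ) * (L * L) :=
    (l1Norm_absDx_le (support_cmul_subset_Icc hu hū)).trans (by gcongr)
  calc l1Norm (Ncal u)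
      ≤ ‖-(I / 2)‖ * l1Norm (cmul (cmul u (conjC u)) u)
        + ‖(3 : ℂ) / 2‖ * l1Norm (cmul (cmul u (conjC u)) (dx u))
        + ‖(1 : ℂ) / 4‖ * l1Norm (cmul (cmul u u) (dx (conjC u)))
        + ‖I / 2‖ * l1Norm (cmul u (absDx (cmul u (conjC u)))) := by
        refine (l1Norm_add_le _ _).trans (add_le_add ?_ (l1Norm_smul_le _ _))
        refine (l1Norm_sub_le _ _).trans (add_le_add ?_ (l1Norm_smul_le _ _))
        exact (l1Norm_sub_le _ _).trans (add_le_add (l1Norm_smul_le _ _) (l1Norm_smul_le _ _))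
    _ ≤ 1 / 2 * (L * L * L) + 3 / 2 * (L * L * (R * L)) + 1 / 4 * (L * L * (R * L))
        + 1 / 2 * (L * ((R + R : ℤ) * (L * L))) := by
        simp only [norm_neg, norm_div, norm_I, RCLike.norm_ofNat, norm_one]
        gcongr
        · exact l1Norm_cmul_le_of_le huū le_rfl
        · exact l1Norm_cmul_le_of_le huū (l1Norm_dx_le hu)
        · exact l1Norm_cmul_le_of_le (l1Norm_cmul_le_of_le le_rfl le_rfl) hdxū
        · exact l1Norm_cmul_le_of_le le_rfl habs
    _ ≤ 3 * (1 + R) * L ^ 3 := by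
        have : (0 : ℝ) ≤ R := by exact_mod_cast hR
        push_cast
        nlinarith [pow_nonneg (l1Norm_nonneg u) 3, mul_nonneg this (pow_nonneg (l1Norm_nonneg u) 3)]

end L1

section Sobolev

lemma HsNorm_nonneg (s : ℝ) (g : ℤ → ℂ) : 0 ≤ HsNorm s g :=
  Real.rpow_nonneg (tsum_nonneg fun n => by positivity) _

variable {g : ℤ → ℂ} {S : Finset ℤ}

lemma HsNorm_eq_sqrt_sum (hS : ∀ n ∉ S, g n = 0) (s : ℝ) :
    HsNorm s g = √(∑ n ∈ S, ((1 + |(n : ℝ)|) ^ s * ‖g n‖) ^ 2) := by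
  rw [HsNorm, tsum_eq_sum (fun n hn => by simp [hS n hn]), Real.sqrt_eq_rpow]
  congr 1
  refine Finset.sum_congr rfl fun n _ => ?_
  rw [mul_pow, ← Real.rpow_mul_natCast (by positivity), mul_comm s]
  norm_num

lemma rpow_mul_norm_le_HsNorm (hS : ∀ n ∉ S, g n = 0) (s : ℝ) (n : ℤ) :
    (1 + |(n : ℝ)|) ^ s * ‖g n‖ ≤ HsNorm s g := by
  rw [HsNorm_eq_sqrt_sum hS]
  by_cases hn : n ∈ S
  · exact Real.le_sqrt_of_sq_le
      (Finset.single_le_sum (f := fun n : ℤ => ((1 + |(n : ℝ)|) ^ s * ‖g n‖) ^ 2)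
        (fun _ _ => sq_nonneg _) hn)
  · simp [hS n hn]

end Sobolev

section ThirdIterate

variable {u₀ : TrigPoly1} {n : ℤ}

lemma u3_apply_eq_zero (h : ∀ τ, Ncal (propL τ u₀) n = 0) (t : ℝ) : u3 u₀ t n = 0 := by
  simp [u3, h]

lemma norm_u3_apply_le {K : ℝ} (h : ∀ τ, ‖Ncal (propL τ u₀) n‖ ≤ K) (t : ℝ) :
    ‖u3 u₀ t n‖ ≤ K * |t| := by
  unfold u3
  refine (intervalIntegral.norm_integral_le_of_norm_le_const fun τ _ => ?_).trans_eq
    (by rw [sub_zero])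
  rw [norm_mul, norm_exp_I_mul, one_mul]
  exact h τ

lemma u3_apply_of_resonant {c : ℂ} (h : ∀ τ : ℝ, Ncal (propL τ u₀) n = exp (I * τ * P n) * c)
    (t : ℝ) : u3 u₀ t n = t * (exp (I * t * P n) * c) := by
  have integrand : ∀ τ : ℝ, exp (I * ((t - τ : ℝ) : ℂ) * P n) * Ncal (propL τ u₀) n =
      exp (I * t * P n) * c := fun τ => by
    rw [h, ← mul_assoc, ← exp_add]
    push_cast
    ring_nf
  simp only [u3, integrand, intervalIntegral.integral_const, sub_zero, real_smul]

variable {R : ℤ}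

lemma u3_apply_eq_zero_of_support_subset (hu₀ : u₀.support ⊆ Finset.Icc (-R) R)
    (hn : n ∉ Finset.Icc (-(3 * R)) (3 * R)) (t : ℝ) : u3 u₀ t n = 0 :=
  u3_apply_eq_zero (fun τ => notMem_support_iff.1 fun h =>
    hn (support_Ncal_subset_Icc ((support_propL_subset τ u₀).trans hu₀) h)) t

lemma norm_u3_apply_le_of_support_subset (hR : 0 ≤ R) (hu₀ : u₀.support ⊆ Finset.Icc (-R) R)
    (t : ℝ) (n : ℤ) : ‖u3 u₀ t n‖ ≤ 3 * (1 + R) * l1Norm u₀ ^ 3 * |t| :=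
  norm_u3_apply_le (fun τ => by
    refine (norm_apply_le_l1Norm _ n).trans <|
      (l1Norm_Ncal_le hR ((support_propL_subset τ u₀).trans hu₀)).trans ?_
    gcongr
    · exact l1Norm_nonneg _
    · exact l1Norm_propL_le τ u₀) t

lemma exists_support_subset_Icc (f : TrigPoly1) : ∃ R : ℤ, 0 ≤ R ∧ f.support ⊆ Finset.Icc (-R) R :=
  ⟨∑ n ∈ f.support, |n|, Finset.sum_nonneg fun _ _ => abs_nonneg _, fun _ hn =>
    Finset.mem_Icc.2 (abs_le.1 (Finset.single_le_sum (fun _ _ => abs_nonneg _) hn))⟩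

/-- The supremum over `[0, 1]` in the main theorem is a conditional one (junk `0` on an
unbounded range), so its lower bound needs this. -/
lemma bddAbove_HsNorm_u3 (s : ℝ) (u₀ : TrigPoly1) :
    BddAbove (Set.range fun t : Set.Icc (0 : ℝ) 1 => HsNorm s (u3 u₀ t)) := by
  obtain ⟨R, hR, hu₀⟩ := exists_support_subset_Icc u₀
  set S := Finset.Icc (-(3 * R)) (3 * R)
  set K := 3 * (1 + R) * l1Norm u₀ ^ 3
  refine ⟨√(∑ n ∈ S, ((1 + |(n : ℝ)|) ^ s * K) ^ 2), ?_⟩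
  rintro _ ⟨⟨t, ht₀, ht₁⟩, rfl⟩
  dsimp only
  rw [HsNorm_eq_sqrt_sum fun n hn => u3_apply_eq_zero_of_support_subset hu₀ hn t]
  refine Real.sqrt_le_sqrt (Finset.sum_le_sum fun n _ => ?_)
  have := norm_u3_apply_le_of_support_subset hR hu₀ t n
  have hK : 0 ≤ K := by
    have : (0 : ℝ) ≤ R := by exact_mod_cast hR
    have := l1Norm_nonneg u₀
    positivity
  gcongr
  calc ‖u3 u₀ t n‖ ≤ K * |t| := this
    _ ≤ K := by rw [abs_of_nonneg ht₀]; nlinarith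

end ThirdIterate

section InitialData

variable {s : ℝ} {m : ℕ}

lemma u0m_apply_eq_zero (n : ℤ) (hn : n ∉ ({-(m : ℤ), -(m : ℤ) + 1, (m : ℤ) + 1} : Finset ℤ)) :
    u0m s m n = 0 := by
  simp only [Finset.mem_insert, Finset.mem_singleton, not_or] at hn
  simp [u0m, Ne.symm hn.1, Ne.symm hn.2.1, Ne.symm hn.2.2]

lemma norm_u0m_apply_le (hm : 1 ≤ m) (n : ℤ) : ‖u0m s m n‖ ≤ (m : ℝ) ^ (-s) := by
  have hμ : 0 ≤ (m : ℝ) ^ (-s) := by positivity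
  simp only [u0m, Finsupp.smul_apply, Finsupp.add_apply, single_apply, smul_eq_mul, norm_mul,
    norm_real, Real.norm_eq_abs, abs_of_nonneg hμ]
  split_ifs <;> first | omega | simp [hμ]

lemma HsNorm_u0m_le (hs : s < 0) (hm : 1 ≤ m) : HsNorm s (u0m s m) ≤ √3 := by
  rw [HsNorm_eq_sqrt_sum u0m_apply_eq_zero]
  gcongr
  refine (Finset.sum_le_card_nsmul _ _ 1 fun n hn => ?_).trans ?_
  · have hm' : (m : ℝ) ≤ 1 + |(n : ℝ)| := by
      have : (m : ℤ) - 1 ≤ |n| := le_abs.2 (by simp at hn; omega)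
      rw [← Int.cast_abs]
      exact_mod_cast (by omega : (m : ℤ) ≤ 1 + |n|)
    calc ((1 + |(n : ℝ)|) ^ s * ‖u0m s m n‖) ^ 2 ≤ ((m : ℝ) ^ s * (m : ℝ) ^ (-s)) ^ 2 := by
          gcongr (?_ * ?_) ^ 2
          · exact Real.rpow_le_rpow_of_nonpos (by positivity) hm' hs.le
          · exact norm_u0m_apply_le hm n
      _ = 1 := by rw [← Real.rpow_add (by positivity), add_neg_cancel, Real.rpow_zero, one_pow]
  · rw [nsmul_eq_mul, mul_one]
    exact_mod_cast Finset.card_le_three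

end InitialData

section Resonance

variable {s : ℝ} {m : ℕ}

lemma propL_u0m (τ : ℝ) :
    propL τ (u0m s m) =
      single (-(m : ℤ)) (exp (I * τ * P (-(m : ℤ))) * ((m : ℝ) ^ (-s) : ℝ)) +
      single (-(m : ℤ) + 1) (exp (I * τ * P (-(m : ℤ) + 1)) * ((m : ℝ) ^ (-s) : ℝ)) +
      single ((m : ℤ) + 1) (exp (I * τ * P ((m : ℤ) + 1)) * ((m : ℝ) ^ (-s) : ℝ)) := by
  simp only [u0m, smul_add, smul_single, smul_eq_mul, mul_one, propL_add, propL_single]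

lemma Ncal_propL_u0m_apply_neg (hm : 1 ≤ m) (τ : ℝ) :
    Ncal (propL τ (u0m s m)) (-(m : ℤ)) =
      exp (I * τ * P (-(m : ℤ))) * (I * ((21 * m - 14) / 4 * ((m : ℝ) ^ (-s)) ^ 3 : ℝ)) := by
  have hμ : 0 ≤ (m : ℝ) ^ (-s) := by positivity
  rw [propL_u0m, Ncal_three_modes_apply (m : ℤ) (by omega)]
  simp only [norm_mul, norm_exp_I_mul, norm_real, Real.norm_eq_abs, abs_of_nonneg hμ, one_mul]
  push_cast
  ring

lemma HsNorm_u3_u0m_one_ge (hs : s < 0) (hm : 1 ≤ m) :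
    (2 : ℝ) ^ s * (m : ℝ) ^ (-(2 * s)) ≤ HsNorm s (u3 (u0m s m) 1) := by
  obtain ⟨R, -, hR⟩ := exists_support_subset_Icc (u0m s m)
  set μ := (m : ℝ) ^ (-s)
  have hm₀ : (0 : ℝ) < m := by positivity
  have hm₁ : (1 : ℝ) ≤ m := by exact_mod_cast hm
  have hpow : (m : ℝ) ^ s * μ ^ 3 = (m : ℝ) ^ (-(2 * s)) := by
    rw [← Real.rpow_natCast, ← Real.rpow_mul hm₀.le, ← Real.rpow_add hm₀]
    ring_nf
  have hu3 : ‖u3 (u0m s m) 1 (-(m : ℤ))‖ = (21 * m - 14) / 4 * μ ^ 3 := by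
    rw [u3_apply_of_resonant (Ncal_propL_u0m_apply_neg hm), norm_mul, norm_mul, norm_exp_I_mul,
      norm_mul, norm_I, norm_real, norm_real, Real.norm_eq_abs, Real.norm_eq_abs, abs_one,
      abs_of_nonneg (mul_nonneg (by linarith) (by positivity))]
    ring
  calc (2 : ℝ) ^ s * (m : ℝ) ^ (-(2 * s)) = (2 * m : ℝ) ^ s * μ ^ 3 * 1 := by
        rw [Real.mul_rpow zero_le_two hm₀.le, mul_one, mul_assoc, hpow]
    _ ≤ (1 + m : ℝ) ^ s * μ ^ 3 * ((21 * m - 14) / 4) := by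
        gcongr ?_ * _ * ?_
        · exact Real.rpow_le_rpow_of_nonpos (by positivity) (by linarith) hs.le
        · linarith
    _ = (1 + |((-(m : ℤ) : ℤ) : ℝ)|) ^ s * ‖u3 (u0m s m) 1 (-(m : ℤ))‖ := by
        rw [hu3]
        push_cast
        rw [abs_neg, abs_of_pos hm₀]
        ring
    _ ≤ HsNorm s (u3 (u0m s m) 1) :=
        rpow_mul_norm_le_HsNorm (fun n hn => u3_apply_eq_zero_of_support_subset hR hn 1) s _

end Resonance

theorem stmt19 (s : ℝ) (hs : s < 0) :
    (∃ C₀ : ℝ, 0 < C₀ ∧ ∃ c : ℝ, 0 < c ∧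
      (∀ m : ℕ, 2 ≤ m → HsNorm s (u0m s m) ≤ C₀) ∧
      ∃ M : ℕ, ∀ m : ℕ, M ≤ m →
        c * (m : ℝ) ^ (-(2 * s)) ≤ ⨆ t : Set.Icc (0:ℝ) 1, HsNorm s (u3 (u0m s m) t)) ∧
    ¬ ∃ C : ℝ, ∀ u₀ : TrigPoly1,
        (⨆ t : Set.Icc (0:ℝ) 1, HsNorm s (u3 u₀ t)) ≤ C * HsNorm s u₀ := by
  have lower : ∀ m : ℕ, 2 ≤ m →
      (2 : ℝ) ^ s * (m : ℝ) ^ (-(2 * s)) ≤ ⨆ t : Set.Icc (0:ℝ) 1, HsNorm s (u3 (u0m s m) t) :=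
    fun m hm => le_ciSup_of_le (bddAbove_HsNorm_u3 s _) ⟨1, by simp⟩
      (HsNorm_u3_u0m_one_ge hs (by omega))
  refine ⟨⟨√3, by positivity, 2 ^ s, by positivity,
    fun m hm => HsNorm_u0m_le hs (by omega), 2, lower⟩, ?_⟩
  rintro ⟨C, hC⟩
  have bounded : ∀ m : ℕ, 2 ≤ m → (m : ℝ) ^ (-(2 * s)) ≤ |C| * √3 / 2 ^ s := fun m hm => by
    rw [le_div_iff₀ (by positivity), mul_comm]
    calc (2 : ℝ) ^ s * (m : ℝ) ^ (-(2 * s)) ≤ C * HsNorm s (u0m s m) := (lower m hm).trans (hC _)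
      _ ≤ |C| * √3 :=
        mul_le_mul (le_abs_self C) (HsNorm_u0m_le hs (by omega)) (HsNorm_nonneg s _) (abs_nonneg C)
  have unbounded : Filter.Tendsto (fun m : ℕ => (m : ℝ) ^ (-(2 * s))) Filter.atTop Filter.atTop :=
    (tendsto_rpow_atTop (by linarith)).comp tendsto_natCast_atTop_atTop
  obtain ⟨m, hlarge, hm⟩ :=
    ((unbounded.eventually_gt_atTop _).and (Filter.eventually_ge_atTop 2)).exists
  exact (bounded m hm).not_gt hlarge
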